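/- Injectivity of the stabilization map between fundamental-representation models: let 0 ≤ m ≤ N. If v ∈ Λ^{N−m}V_N satisfies v ∧ α_{N+1} = η_{N+1} ∧ w for some w ∈ Λ^{N−m−1}V_{N+1}, then v = η_N ∧ u for some u ∈ Λ^{N−m−2}V_N. Consequently the linear map M^{(N)}_{N−m} → M^{(N+1)}_{N+1−m} induced by v ↦ v ∧ α_{N+1} is well defined and injective. -/

import Mathlib

open scoped BigOperators

noncomputable section

/-- The infinite-dimensional space `V_∞ = ⋃_N V_N`, with basis vectors `α_{i+1}`
(the `Sum.inl i` coordinates) and `β_{i+1}` (the `Sum.inr i` coordinates), `i : ℕ`. -/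
abbrev Vinf : Type := (ℕ ⊕ ℕ) →₀ ℂ

/-- The basis vector `α_{i+1}` of `V_∞`. -/
def avI (i : ℕ) : Vinf := Finsupp.single (Sum.inl i) 1

/-- The basis vector `β_{i+1}` of `V_∞`. -/
def bvI (i : ℕ) : Vinf := Finsupp.single (Sum.inr i) 1

/-- `V_N ⊆ V_∞`: the span of `α₁,…,α_N,β₁,…,β_N`. -/
def VN (N : ℕ) : Submodule ℂ Vinf :=
  Submodule.span ℂ ({x | ∃ i < N, x = avI i} ∪ {x | ∃ i < N, x = bvI i})

/-- `ΛᵏV_N`, as a subspace of the exterior algebra of `V_∞`: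
the span of the `k`-fold wedge products of elements of `V_N`. -/
def EP (N k : ℕ) : Submodule ℂ (ExteriorAlgebra ℂ Vinf) :=
  Submodule.span ℂ
    {z | ∃ f : Fin k → Vinf, (∀ i, f i ∈ VN N) ∧ z = ExteriorAlgebra.ιMulti ℂ k f}

/-- `ΛᵏV_N` for `k ∈ ℤ`, with `ΛᵏV_N = 0` for `k < 0`. -/
def EPz (N : ℕ) (k : ℤ) : Submodule ℂ (ExteriorAlgebra ℂ Vinf) :=
  if 0 ≤ k then EP N k.toNat else ⊥

/-- `η_N = ∑_{i=1}^N αᵢ ∧ βᵢ ∈ Λ²V_N`. -/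
def etaI (N : ℕ) : ExteriorAlgebra ℂ Vinf :=
  ∑ i ∈ Finset.range N, ExteriorAlgebra.ι ℂ (avI i) * ExteriorAlgebra.ι ℂ (bvI i)

/-- The image `η_N ∧ Λ^{k−2}V_N ⊆ ΛᵏV_N` (zero for `k < 2`), so that
`M^{(N)}_k = ΛᵏV_N / (η_N ∧ Λ^{k−2}V_N)` is the `k`-th fundamental representation. -/
def etaSubI (N k : ℕ) : Submodule ℂ (ExteriorAlgebra ℂ Vinf) :=
  if k < 2 then ⊥ else Submodule.map (LinearMap.mulLeft ℂ (etaI N)) (EP N (k - 2))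

/-!
Contract `v ∧ α_{N+1} = η_{N+1} ∧ w` with the coordinate functional of `α_{N+1}` and then
project `V_{N+1}` onto `V_N` along `α_{N+1}, β_{N+1}`. On the left this returns `±v`, since the
contraction kills `ΛV_N`. On the right the contraction commutes with `η_N`, while the extra term
`α_{N+1} ∧ β_{N+1} ∧ w` only produces multiples of `α_{N+1}` or `β_{N+1}`, which the projection
kills; hence `±v = η_N ∧ u` with `u` the projected contraction of `w`, one degree lower than `w`.
Conversely `η_N ∧ u ∧ α_{N+1} = η_{N+1} ∧ (u ∧ α_{N+1})`, because
`α_{N+1} ∧ β_{N+1} ∧ u ∧ α_{N+1} = 0`.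
-/

namespace ExteriorAlgebra

variable {R M M' : Type*} [CommRing R] [AddCommGroup M] [Module R M] [AddCommGroup M'] [Module R M']

theorem exists_mul_ι_eq_ι_mul (a : M) (z : ExteriorAlgebra R M) :
    ∃ z', z * ι R a = ι R a * z' := by
  induction z using ExteriorAlgebra.induction with
  | algebraMap r => exact ⟨algebraMap R _ r, Algebra.commutes r _⟩
  | ι b => exact ⟨-ι R b, by rw [mul_neg, eq_neg_iff_add_eq_zero, ι_add_mul_swap]⟩
  | mul x y hx hy =>
    obtain ⟨x', hx'⟩ := hx
    obtain ⟨y', hy'⟩ := hy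
    exact ⟨x' * y', by rw [mul_assoc, hy', ← mul_assoc, hx', mul_assoc]⟩
  | add x y hx hy =>
    obtain ⟨x', hx'⟩ := hx
    obtain ⟨y', hy'⟩ := hy
    exact ⟨x' + y', by rw [add_mul, hx', hy', mul_add]⟩

theorem ι_mul_mul_ι (a : M) (z : ExteriorAlgebra R M) : ι R a * z * ι R a = 0 := by
  obtain ⟨z', hz'⟩ := exists_mul_ι_eq_ι_mul a z
  rw [mul_assoc, hz', ← mul_assoc, ι_sq_zero, zero_mul]

theorem span_ιMulti_eq_pow (W : Submodule R M) (k : ℕ) :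
    Submodule.span R {z | ∃ f : Fin k → M, (∀ i, f i ∈ W) ∧ z = ιMulti R k f} =
      W.map (ι R) ^ k := by
  induction k with
  | zero =>
    rw [pow_zero, Submodule.one_eq_span, ← Set.image_singleton]
    congr 1
    ext z
    simp [Set.mem_singleton_iff]
  | succ k ih =>
    rw [pow_succ', ← ih, ← Submodule.span_eq (W.map (ι R)), Submodule.span_mul_span]
    congr 1
    ext z
    constructor
    · rintro ⟨f, hf, rfl⟩
      rw [ιMulti_succ_apply]
      exact Set.mul_mem_mul ⟨f 0, hf 0, rfl⟩ ⟨Matrix.vecTail f, fun i => hf i.succ, rfl⟩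
    · intro hz
      obtain ⟨_, ⟨a, ha, rfl⟩, _, ⟨f, hf, rfl⟩, rfl⟩ := Set.mem_mul.mp hz
      refine ⟨Fin.cons a f, Fin.cases ha hf, ?_⟩
      rw [ιMulti_succ_apply]
      simp [Matrix.vecTail]

variable {W : Submodule R M} {k : ℕ} {z : ExteriorAlgebra R M}

theorem mul_ι_mem_pow_succ (hz : z ∈ W.map (ι R) ^ k) {a : M} (ha : a ∈ W) :
    z * ι R a ∈ W.map (ι R) ^ (k + 1) :=
  pow_succ (W.map (ι R)) k ▸ Submodule.mul_mem_mul hz (Submodule.mem_map_of_mem ha)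

theorem map_mem_pow {W' : Submodule R M'} {f : M →ₗ[R] M'} (hf : W.map f ≤ W')
    (hz : z ∈ W.map (ι R) ^ k) : map f z ∈ W'.map (ι R) ^ k := by
  have hle : (W.map (ι R)).map (map f).toLinearMap ≤ W'.map (ι R) := by
    rw [← Submodule.map_comp, map_comp_ι, Submodule.map_comp]
    exact Submodule.map_mono hf
  have := Submodule.mem_map_of_mem (f := (map f).toLinearMap) hz
  rw [Submodule.map_pow] at this
  exact pow_le_pow_left' hle k this

theorem map_eq_self_of_mem_pow {f : M →ₗ[R] M} (hf : ∀ x ∈ W, f x = x)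
    (hz : z ∈ W.map (ι R) ^ k) : map f z = z := by
  induction hz using Submodule.pow_induction_on_left' with
  | algebraMap r => exact AlgHom.commutes _ r
  | add x y i _ _ hx hy => rw [map_add, hx, hy]
  | mem_mul m hm i x _ hx =>
    obtain ⟨a, ha, rfl⟩ := hm
    rw [map_mul, hx, map_apply_ι, hf a ha]

theorem contractLeft_ι (d : Module.Dual R M) (a : M) :
    CliffordAlgebra.contractLeft d (ι R a) = algebraMap R (ExteriorAlgebra R M) (d a) :=
  CliffordAlgebra.contractLeft_ι _ _ _

theorem contractLeft_ι_mul (d : Module.Dual R M) (a : M) (w : ExteriorAlgebra R M) :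
    CliffordAlgebra.contractLeft d (ι R a * w) =
      d a • w - ι R a * CliffordAlgebra.contractLeft d w :=
  CliffordAlgebra.contractLeft_ι_mul _ _ _

theorem contractLeft_eq_zero_of_mem_one (d : Module.Dual R M)
    (hz : z ∈ (1 : Submodule R (ExteriorAlgebra R M))) : CliffordAlgebra.contractLeft d z = 0 := by
  obtain ⟨r, rfl⟩ := Submodule.mem_one.mp hz
  exact CliffordAlgebra.contractLeft_algebraMap (Q := 0) (d := d) r

theorem contractLeft_mem_pow (d : Module.Dual R M) (hz : z ∈ W.map (ι R) ^ (k + 1)) :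
    CliffordAlgebra.contractLeft d z ∈ W.map (ι R) ^ k := by
  induction k generalizing z with
  | zero =>
    rw [pow_one] at hz
    obtain ⟨a, -, rfl⟩ := hz
    rw [contractLeft_ι, pow_zero]
    exact Submodule.algebraMap_mem _
  | succ k ih =>
    rw [pow_succ'] at hz
    induction hz using Submodule.mul_induction_on' with
    | mem_mul_mem m hm x hx =>
      obtain ⟨a, ha, rfl⟩ := hm
      rw [contractLeft_ι_mul]
      refine Submodule.sub_mem _ (Submodule.smul_mem _ _ hx) ?_
      rw [pow_succ']
      exact Submodule.mul_mem_mul (Submodule.mem_map_of_mem ha) (ih hx)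
    | add x _ y _ hx hy => rw [map_add]; exact Submodule.add_mem _ hx hy

theorem contractLeft_mul_ι_of_mem_pow {d : Module.Dual R M} (hd : ∀ x ∈ W, d x = 0)
    (hz : z ∈ W.map (ι R) ^ k) (a : M) :
    CliffordAlgebra.contractLeft d (z * ι R a) = ((-1) ^ k * d a) • z := by
  induction hz using Submodule.pow_induction_on_left' with
  | algebraMap r =>
    rw [← Algebra.smul_def, map_smul, contractLeft_ι, pow_zero, one_mul,
      Algebra.algebraMap_eq_smul_one, Algebra.algebraMap_eq_smul_one, smul_smul, smul_smul,
      mul_comm]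
  | add x y i _ _ hx hy => rw [add_mul, map_add, hx, hy, smul_add]
  | mem_mul m hm i x _ hx =>
    obtain ⟨b, hb, rfl⟩ := hm
    rw [mul_assoc, contractLeft_ι_mul, hd b hb, zero_smul, zero_sub, hx, mul_smul_comm,
      ← neg_smul, pow_succ]
    ring_nf

theorem contractLeft_ι_mul_ι_mul (d : Module.Dual R M) (a b : M) (w : ExteriorAlgebra R M) :
    CliffordAlgebra.contractLeft d (ι R a * ι R b * w) =
      d a • (ι R b * w) - d b • (ι R a * w) + ι R a * ι R b * CliffordAlgebra.contractLeft d w := by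
  rw [mul_assoc, contractLeft_ι_mul, contractLeft_ι_mul, mul_sub, mul_smul_comm, mul_assoc]
  abel

end ExteriorAlgebra

section

open ExteriorAlgebra

def avDual (N : ℕ) : Module.Dual ℂ Vinf := Finsupp.lapply (Sum.inl N)

def projVN (N : ℕ) : Vinf →ₗ[ℂ] Vinf :=
  LinearMap.id - LinearMap.toSpanSingleton ℂ Vinf (avI N) ∘ₗ Finsupp.lapply (Sum.inl N)
    - LinearMap.toSpanSingleton ℂ Vinf (bvI N) ∘ₗ Finsupp.lapply (Sum.inr N)

theorem VN_le_iff {N : ℕ} {p : Submodule ℂ Vinf} :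
    VN N ≤ p ↔ ∀ i < N, avI i ∈ p ∧ bvI i ∈ p := by
  simp only [VN, Submodule.span_le, Set.subset_def, SetLike.mem_coe, forall_and]
  aesop

theorem avI_mem_VN {i N : ℕ} (h : i < N) : avI i ∈ VN N :=
  Submodule.subset_span (Or.inl ⟨i, h, rfl⟩)

theorem bvI_mem_VN {i N : ℕ} (h : i < N) : bvI i ∈ VN N :=
  Submodule.subset_span (Or.inr ⟨i, h, rfl⟩)

theorem VN_mono (N : ℕ) : VN N ≤ VN (N + 1) :=
  VN_le_iff.2 fun _ hi => ⟨avI_mem_VN (by omega), bvI_mem_VN (by omega)⟩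

theorem avDual_avI (N i : ℕ) : avDual N (avI i) = if i = N then 1 else 0 := by
  simp [avDual, avI, Finsupp.single_apply]

theorem avDual_bvI (N i : ℕ) : avDual N (bvI i) = 0 := by
  simp [avDual, bvI]

theorem projVN_avI (N i : ℕ) : projVN N (avI i) = if i = N then 0 else avI i := by
  by_cases h : i = N <;> simp [projVN, avI, bvI, h]

theorem projVN_bvI (N i : ℕ) : projVN N (bvI i) = if i = N then 0 else bvI i := by
  by_cases h : i = N <;> simp [projVN, avI, bvI, h]

theorem VN_le_ker_avDual (N : ℕ) : VN N ≤ LinearMap.ker (avDual N) :=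
  VN_le_iff.2 fun i hi => by simp [avDual_avI, avDual_bvI, hi.ne]

theorem projVN_eq_self {N : ℕ} {x : Vinf} (hx : x ∈ VN N) : projVN N x = x := by
  have : VN N ≤ LinearMap.eqLocus (projVN N) LinearMap.id :=
    VN_le_iff.2 fun i hi => by simp [projVN_avI, projVN_bvI, hi.ne]
  exact this hx

theorem map_projVN_VN_succ_le (N : ℕ) : (VN (N + 1)).map (projVN N) ≤ VN N := by
  rw [Submodule.map_le_iff_le_comap, VN_le_iff]
  intro i hi
  simp only [Submodule.mem_comap, projVN_avI, projVN_bvI]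
  split_ifs with h
  · exact ⟨Submodule.zero_mem _, Submodule.zero_mem _⟩
  · exact ⟨avI_mem_VN (by omega), bvI_mem_VN (by omega)⟩

theorem EP_eq_pow (N k : ℕ) : EP N k = (VN N).map (ι ℂ) ^ k :=
  span_ιMulti_eq_pow _ _

theorem EPz_natCast (N k : ℕ) : EPz N k = EP N k := by
  simp [EPz]

theorem eq_zero_of_mem_EPz_of_neg {N : ℕ} {j : ℤ} {w : ExteriorAlgebra ℂ Vinf} (hj : j < 0)
    (hw : w ∈ EPz N j) : w = 0 := by
  rwa [EPz, if_neg (by omega), Submodule.mem_bot] at hw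

theorem contractLeft_mem_EPz (d : Module.Dual ℂ Vinf) {N : ℕ} {j : ℤ}
    {w : ExteriorAlgebra ℂ Vinf} (hw : w ∈ EPz N j) :
    CliffordAlgebra.contractLeft d w ∈ EPz N (j - 1) := by
  obtain hj | rfl | hj := lt_trichotomy j 0
  · rw [eq_zero_of_mem_EPz_of_neg hj hw, map_zero]
    exact Submodule.zero_mem _
  · rw [← Nat.cast_zero, EPz_natCast, EP_eq_pow, pow_zero] at hw
    rw [contractLeft_eq_zero_of_mem_one d hw]
    exact Submodule.zero_mem _
  · obtain ⟨k, rfl⟩ : ∃ k : ℕ, j = k + 1 := ⟨j.toNat - 1, by omega⟩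
    rw [← Nat.cast_succ, EPz_natCast, EP_eq_pow] at hw
    rw [add_sub_cancel_right, EPz_natCast, EP_eq_pow]
    exact contractLeft_mem_pow d hw

theorem map_projVN_mem_EPz {N : ℕ} {j : ℤ} {w : ExteriorAlgebra ℂ Vinf}
    (hw : w ∈ EPz (N + 1) j) : ExteriorAlgebra.map (projVN N) w ∈ EPz N j := by
  obtain hj | hj := lt_or_ge j 0
  · rw [eq_zero_of_mem_EPz_of_neg hj hw, map_zero]
    exact Submodule.zero_mem _
  · lift j to ℕ using hj
    rw [EPz_natCast, EP_eq_pow] at hw ⊢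
    exact map_mem_pow (map_projVN_VN_succ_le N) hw

theorem mul_ι_avI_mem_EPz {N : ℕ} {j : ℤ} {u : ExteriorAlgebra ℂ Vinf} (hu : u ∈ EPz N j) :
    u * ι ℂ (avI N) ∈ EPz (N + 1) (j + 1) := by
  obtain hj | hj := lt_or_ge j 0
  · rw [eq_zero_of_mem_EPz_of_neg hj hu, zero_mul]
    exact Submodule.zero_mem _
  · lift j to ℕ using hj
    rw [EPz_natCast, EP_eq_pow] at hu
    rw [← Nat.cast_succ, EPz_natCast, EP_eq_pow]
    exact mul_ι_mem_pow_succ (pow_le_pow_left' (Submodule.map_mono (VN_mono N)) j hu)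
      (avI_mem_VN N.lt_succ_self)

theorem etaI_succ (N : ℕ) : etaI (N + 1) = etaI N + ι ℂ (avI N) * ι ℂ (bvI N) :=
  Finset.sum_range_succ _ N

theorem contractLeft_avDual_etaI_mul (N : ℕ) (w : ExteriorAlgebra ℂ Vinf) :
    CliffordAlgebra.contractLeft (avDual N) (etaI N * w) =
      etaI N * CliffordAlgebra.contractLeft (avDual N) w := by
  simp only [etaI, Finset.sum_mul, map_sum]
  refine Finset.sum_congr rfl fun i hi => ?_
  rw [contractLeft_ι_mul_ι_mul, avDual_avI, avDual_bvI, if_neg (Finset.mem_range.1 hi).ne]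
  simp

theorem map_projVN_etaI (N : ℕ) : ExteriorAlgebra.map (projVN N) (etaI N) = etaI N := by
  rw [etaI, map_sum]
  refine Finset.sum_congr rfl fun i hi => ?_
  rw [map_mul, map_apply_ι, map_apply_ι, projVN_avI, projVN_bvI,
    if_neg (Finset.mem_range.1 hi).ne, if_neg (Finset.mem_range.1 hi).ne]

theorem map_projVN_contractLeft_etaI_succ_mul (N : ℕ) (w : ExteriorAlgebra ℂ Vinf) :
    ExteriorAlgebra.map (projVN N) (CliffordAlgebra.contractLeft (avDual N) (etaI (N + 1) * w)) =
      etaI N * ExteriorAlgebra.map (projVN N) (CliffordAlgebra.contractLeft (avDual N) w) := by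
  rw [etaI_succ, add_mul, map_add, contractLeft_avDual_etaI_mul, contractLeft_ι_mul_ι_mul,
    avDual_avI, avDual_bvI, if_pos rfl]
  simp [map_apply_ι, projVN_avI, projVN_bvI, map_projVN_etaI]

theorem etaI_succ_mul_mul_ι_avI (N : ℕ) (u : ExteriorAlgebra ℂ Vinf) :
    etaI (N + 1) * (u * ι ℂ (avI N)) = etaI N * u * ι ℂ (avI N) := by
  have h : ι ℂ (avI N) * ι ℂ (bvI N) * (u * ι ℂ (avI N)) = 0 := by
    rw [← mul_assoc, mul_assoc (ι ℂ (avI N)), ι_mul_mul_ι]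
  rw [etaI_succ, add_mul, h, add_zero, mul_assoc]

end

theorem stabilization_injective_general (N m : ℕ) :
    (∀ v ∈ EP N (N - m),
      (∃ w ∈ EPz (N + 1) ((N : ℤ) - m - 1),
          v * ExteriorAlgebra.ι ℂ (avI N) = etaI (N + 1) * w) →
      ∃ u ∈ EPz N ((N : ℤ) - m - 2), v = etaI N * u) ∧
    (∀ u ∈ EPz N ((N : ℤ) - m - 2),
      ∃ w ∈ EPz (N + 1) ((N : ℤ) - m - 1),
        (etaI N * u) * ExteriorAlgebra.ι ℂ (avI N) = etaI (N + 1) * w) := by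
  refine ⟨?_, fun u hu => ⟨u * ExteriorAlgebra.ι ℂ (avI N), ?_, ?_⟩⟩
  · rintro v hv ⟨w, hw, hvw⟩
    set π := ExteriorAlgebra.map (projVN N)
    set D := CliffordAlgebra.contractLeft (avDual N)
    rw [EP_eq_pow] at hv
    have key : (-1 : ℂ) ^ (N - m) • v = etaI N * π (D w) := by
      calc (-1 : ℂ) ^ (N - m) • v = π (D (v * ExteriorAlgebra.ι ℂ (avI N))) := by
            rw [ExteriorAlgebra.contractLeft_mul_ι_of_mem_pow (VN_le_ker_avDual N) hv, avDual_avI,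
              if_pos rfl, mul_one, map_smul,
              ExteriorAlgebra.map_eq_self_of_mem_pow (fun _ => projVN_eq_self) hv]
        _ = etaI N * π (D w) := by rw [hvw, map_projVN_contractLeft_etaI_succ_mul]
    refine ⟨(-1 : ℂ) ^ (N - m) • π (D w), ?_, ?_⟩
    · have hu := map_projVN_mem_EPz (contractLeft_mem_EPz (avDual N) hw)
      rw [sub_sub, one_add_one_eq_two] at hu
      exact Submodule.smul_mem _ _ hu
    · rw [mul_smul_comm, ← key, smul_smul, ← pow_add, Even.neg_one_pow ⟨_, rfl⟩, one_smul]
  · convert mul_ι_avI_mem_EPz hu using 2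
    ring
  · rw [etaI_succ_mul_mul_ι_avI]

/-- Injectivity of the stabilization map between fundamental
representation models: let `0 ≤ m ≤ N`.  If `v ∈ Λ^{N−m}V_N` satisfies
`v ∧ α_{N+1} = η_{N+1} ∧ w` for some `w ∈ Λ^{N−m−1}V_{N+1}`, then `v = η_N ∧ u`
for some `u ∈ Λ^{N−m−2}V_N`.  Consequently the linear map
`M^{(N)}_{N−m} → M^{(N+1)}_{N+1−m}` induced by `v ↦ v ∧ α_{N+1}` is well defined
(second conjunct) and injective (first conjunct). -/
theorem stabilization_injective (N m : ℕ) (hm : m ≤ N) :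
    (∀ v ∈ EP N (N - m),
      (∃ w ∈ EPz (N + 1) ((N : ℤ) - m - 1),
          v * ExteriorAlgebra.ι ℂ (avI N) = etaI (N + 1) * w) →
      ∃ u ∈ EPz N ((N : ℤ) - m - 2), v = etaI N * u) ∧
    (∀ u ∈ EPz N ((N : ℤ) - m - 2),
      ∃ w ∈ EPz (N + 1) ((N : ℤ) - m - 1),
        (etaI N * u) * ExteriorAlgebra.ι ℂ (avI N) = etaI (N + 1) * w) :=
  stabilization_injective_general N m

end
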